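/- arXiv:2306.04416 — 2 statements merged into one kernel-verified Lean document; each statement's English description precedes it below -/
import Mathlib

section
/- Let u ∈ C⁴(Ω̄) solve Δ²u = |u|^{p-1}u in a bounded C¹ domain Ω ⊂ ℝ⁴, and fix y ∈ ℝ⁴. Then the Pohozaev identity holds: (4/(p+1))∫_Ω |u|^{p+1} dx = ∫_{∂Ω} [⟨x-y,ν⟩|u|^{p+1}/(p+1) + (1/2)⟨x-y,ν⟩(Δu)² - 2(∂u/∂ν)Δu] dS - ∫_{∂Ω} [(∂(Δu)/∂ν)⟨x-y,∇u⟩ + (∂u/∂ν)⟨x-y,∇(Δu)⟩ - ⟨∇u,∇(Δu)⟩⟨x-y,ν⟩] dS. -/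
/-!
Write `v = Δu` and let `F` be a primitive of the nonlinearity `f`. Multiplying `Δ²u = f(u)` by
`⟪x - y, ∇u⟫` and integrating by parts amounts to the pointwise identity
`div G₁ - div G₂ = 4 F(u) + (f(u) - Δv) ⟪x - y, ∇u⟫` for the vector fields
`G₁ = (F(u) + v²/2) (x - y) - 2 v ∇u` (`pohozaevField`) and
`G₂ = ⟪x - y, ∇u⟫ ∇v + ⟪x - y, ∇v⟫ ∇u - ⟪∇u, ∇v⟫ (x - y)` (`rellichField`),
in which the Hessian terms of the second field cancel by the symmetry of second derivatives and
the factor `4 = div (x - y)` is the dimension. On `Ω` the last term vanishes, and the divergence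
theorem for both fields gives the identity with `F(t) = |t|^(p+1)/(p+1)`.
-/

open MeasureTheory RealInnerProductSpace

local notation "E" => EuclideanSpace ℝ (Fin 4)

/-- The Laplacian on ℝ⁴ : sum of second partial derivatives. -/
noncomputable def laplacian (f : E → ℝ) (x : E) : ℝ :=
  ∑ i : Fin 4,
    fderiv ℝ (fun y => fderiv ℝ f y (EuclideanSpace.single i 1)) x (EuclideanSpace.single i 1)

/-- The divergence of a vector field on ℝ⁴. -/
noncomputable def vdiv (F : E → E) (x : E) : ℝ :=
  ∑ i : Fin 4, (fderiv ℝ F x (EuclideanSpace.single i 1)) i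

attribute [local fun_prop] DifferentiableAt.inner Differentiable.inner ContDiff.inner

section Gradient

variable {F : Type*} [NormedAddCommGroup F] [InnerProductSpace ℝ F]

lemma fderiv_inner_sub_const_apply {W : F → F} {x : F} (hW : DifferentiableAt ℝ W x) (y w : F) :
    fderiv ℝ (fun z => ⟪z - y, W z⟫) x w = ⟪x - y, fderiv ℝ W x w⟫ + ⟪w, W x⟫ := by
  have hid : DifferentiableAt ℝ (fun z : F => z - y) x := by fun_prop
  rw [fderiv_inner_apply ℝ hid hW]
  simp [fderiv_sub_const]

variable [CompleteSpace F]

lemma inner_fderiv_gradient (f : F → ℝ) (x w z : F) :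
    ⟪fderiv ℝ (gradient f) x w, z⟫ = fderiv ℝ (fderiv ℝ f) x w z := by
  have : gradient f = (InnerProductSpace.toDual ℝ F).symm ∘ fderiv ℝ f := rfl
  rw [this, LinearIsometryEquiv.comp_fderiv]
  exact InnerProductSpace.toDual_symm_apply

lemma inner_fderiv_gradient_comm {f : F → ℝ} {x : F} (hf : ContDiffAt ℝ 2 f x) (w z : F) :
    ⟪fderiv ℝ (gradient f) x w, z⟫ = ⟪fderiv ℝ (gradient f) x z, w⟫ := by
  rw [inner_fderiv_gradient, inner_fderiv_gradient]
  exact hf.isSymmSndFDerivAt (by simp) w z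

lemma ContDiff.gradient {f : F → ℝ} {m n : WithTop ℕ∞} (hf : ContDiff ℝ n f) (hmn : m + 1 ≤ n) :
    ContDiff ℝ m (gradient f) :=
  (InnerProductSpace.toDual ℝ F).symm.contDiff.comp (hf.fderiv_right hmn)

end Gradient

lemma EuclideanSpace.sum_smul_single {ι : Type*} [Fintype ι] [DecidableEq ι]
    (w : EuclideanSpace ℝ ι) : ∑ i, w i • EuclideanSpace.single i (1 : ℝ) = w := by
  ext j
  simp [Pi.single_apply]

lemma vdiv_add {F G : E → E} {x : E} (hF : DifferentiableAt ℝ F x) (hG : DifferentiableAt ℝ G x) :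
    vdiv (fun z => F z + G z) x = vdiv F x + vdiv G x := by
  simp [vdiv, fderiv_fun_add hF hG, Finset.sum_add_distrib]

lemma vdiv_sub {F G : E → E} {x : E} (hF : DifferentiableAt ℝ F x) (hG : DifferentiableAt ℝ G x) :
    vdiv (fun z => F z - G z) x = vdiv F x - vdiv G x := by
  simp [vdiv, fderiv_fun_sub hF hG, Finset.sum_sub_distrib]

lemma vdiv_smul {g : E → ℝ} {V : E → E} {x : E} (hg : DifferentiableAt ℝ g x)
    (hV : DifferentiableAt ℝ V x) :
    vdiv (fun z => g z • V z) x = fderiv ℝ g x (V x) + g x * vdiv V x := by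
  conv_rhs => rw [← EuclideanSpace.sum_smul_single (V x)]
  simp [vdiv, fderiv_fun_smul hg hV, Finset.sum_add_distrib, Finset.mul_sum, mul_comm, add_comm]

lemma vdiv_sub_const (y x : E) : vdiv (fun z => z - y) x = 4 := by
  simp [vdiv, fderiv_sub_const]

lemma vdiv_gradient {f : E → ℝ} {x : E} (hf : DifferentiableAt ℝ (fderiv ℝ f) x) :
    vdiv (gradient f) x = laplacian f x := by
  refine Finset.sum_congr rfl fun i _ => ?_
  rw [fderiv_clm_apply hf (differentiableAt_const _)]
  simpa [EuclideanSpace.inner_single_right] using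
    inner_fderiv_gradient f x (EuclideanSpace.single i 1) (EuclideanSpace.single i 1)

lemma ContDiff.laplacian {f : E → ℝ} {m n : WithTop ℕ∞} (hf : ContDiff ℝ n f) (hmn : m + 2 ≤ n) :
    ContDiff ℝ m (laplacian f) := by
  have hmn' : m + 1 + 1 ≤ n := by rwa [add_assoc, one_add_one_eq_two]
  refine ContDiff.sum fun i _ => ?_
  exact ((hf.fderiv_right hmn').clm_apply contDiff_const |>.fderiv_right le_rfl).clm_apply
    contDiff_const

lemma ContDiff.continuous_vdiv {F : E → E} (hF : ContDiff ℝ 1 F) : Continuous (vdiv F) := by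
  have := hF.continuous_fderiv one_ne_zero
  unfold vdiv
  fun_prop

noncomputable def rellichField (y : E) (u v : E → ℝ) (x : E) : E :=
  ⟪x - y, gradient u x⟫ • gradient v x + ⟪x - y, gradient v x⟫ • gradient u x
    - ⟪gradient u x, gradient v x⟫ • (x - y)

lemma vdiv_rellichField {u v : E → ℝ} (hu : ContDiff ℝ 2 u) (hv : ContDiff ℝ 2 v) (y x : E) :
    vdiv (rellichField y u v) x = ⟪x - y, gradient u x⟫ * laplacian v x
      + ⟪x - y, gradient v x⟫ * laplacian u x - 2 * ⟪gradient u x, gradient v x⟫ := by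
  have hDu : Differentiable ℝ (fderiv ℝ u) :=
    (hu.fderiv_right (m := 1) le_rfl).differentiable one_ne_zero
  have hDv : Differentiable ℝ (fderiv ℝ v) :=
    (hv.fderiv_right (m := 1) le_rfl).differentiable one_ne_zero
  have hgu : Differentiable ℝ (gradient u) := (hu.gradient le_rfl).differentiable one_ne_zero
  have hgv : Differentiable ℝ (gradient v) := (hv.gradient le_rfl).differentiable one_ne_zero
  have hHu : ⟪x - y, fderiv ℝ (gradient u) x (gradient v x)⟫
      = ⟪fderiv ℝ (gradient u) x (x - y), gradient v x⟫ := by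
    rw [real_inner_comm, inner_fderiv_gradient_comm hu.contDiffAt]
  have hHv : ⟪x - y, fderiv ℝ (gradient v) x (gradient u x)⟫
      = ⟪gradient u x, fderiv ℝ (gradient v) x (x - y)⟫ := by
    rw [real_inner_comm, inner_fderiv_gradient_comm hv.contDiffAt, real_inner_comm]
  unfold rellichField
  rw [vdiv_sub, vdiv_add, vdiv_smul, vdiv_smul, vdiv_smul, vdiv_gradient (hDu x),
    vdiv_gradient (hDv x), vdiv_sub_const, fderiv_inner_sub_const_apply (hgu x),
    fderiv_inner_sub_const_apply (hgv x), fderiv_inner_apply ℝ (hgu x) (hgv x), hHu, hHv,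
    real_inner_comm (gradient u x) (gradient v x)]
  · ring
  all_goals fun_prop

lemma contDiff_rellichField {u v : E → ℝ} (hu : ContDiff ℝ 2 u) (hv : ContDiff ℝ 2 v) (y : E) :
    ContDiff ℝ 1 (rellichField y u v) := by
  have hgu : ContDiff ℝ 1 (gradient u) := hu.gradient le_rfl
  have hgv : ContDiff ℝ 1 (gradient v) := hv.gradient le_rfl
  unfold rellichField
  fun_prop

noncomputable def pohozaevField (y : E) (F : ℝ → ℝ) (u : E → ℝ) (x : E) : E :=
  (F (u x) + 1 / 2 * laplacian u x ^ 2) • (x - y) - (2 * laplacian u x) • gradient u x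

lemma contDiff_pohozaevField {F : ℝ → ℝ} {u : E → ℝ} (hF : ContDiff ℝ 1 F) (hu : ContDiff ℝ 3 u)
    (y : E) : ContDiff ℝ 1 (pohozaevField y F u) := by
  have hΔu : ContDiff ℝ 1 (laplacian u) := hu.laplacian le_rfl
  have hgu : ContDiff ℝ 1 (gradient u) := hu.gradient (by norm_num)
  have hu1 : ContDiff ℝ 1 u := hu.of_le (by norm_num)
  unfold pohozaevField
  fun_prop

lemma vdiv_pohozaevField {F : ℝ → ℝ} {f : ℝ} {u : E → ℝ} {x : E} (hF : HasDerivAt F f (u x))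
    (hu : ContDiff ℝ 3 u) (y : E) :
    vdiv (pohozaevField y F u) x = 4 * F (u x) + f * ⟪x - y, gradient u x⟫
      + laplacian u x * ⟪x - y, gradient (laplacian u) x⟫
      - 2 * ⟪gradient u x, gradient (laplacian u) x⟫ := by
  have hdu : Differentiable ℝ u := hu.differentiable (by norm_num)
  have hDu : Differentiable ℝ (fderiv ℝ u) :=
    (hu.fderiv_right (m := 1) (by norm_num)).differentiable one_ne_zero
  have hgu : Differentiable ℝ (gradient u) :=
    (hu.gradient (m := 1) (by norm_num)).differentiable one_ne_zero
  have hΔu : Differentiable ℝ (laplacian u) :=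
    (hu.laplacian (m := 1) le_rfl).differentiable one_ne_zero
  have hFu : HasFDerivAt (fun z => F (u z)) (f • fderiv ℝ u x) x :=
    hF.comp_hasFDerivAt x (hdu x).hasFDerivAt
  have hFdiff := hF.differentiableAt
  have hsq : fderiv ℝ (fun z => 1 / 2 * laplacian u z ^ 2) x (x - y)
      = laplacian u x * fderiv ℝ (laplacian u) x (x - y) := by
    rw [(HasFDerivAt.const_mul ((hΔu x).hasFDerivAt.pow 2) (1 / 2)).fderiv]
    simp only [smul_apply, nsmul_eq_mul, Nat.cast_ofNat, smul_eq_mul]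
    ring
  have hmul : fderiv ℝ (fun z => 2 * laplacian u z) x (gradient u x)
      = 2 * fderiv ℝ (laplacian u) x (gradient u x) := by
    simp [fderiv_const_mul (hΔu x)]
  unfold pohozaevField
  rw [vdiv_sub, vdiv_smul, vdiv_smul, vdiv_sub_const, vdiv_gradient (hDu x),
    fderiv_fun_add hFu.differentiableAt, add_apply, hFu.fderiv, hsq, hmul,
    real_inner_comm (gradient u x) (x - y), real_inner_comm (gradient (laplacian u) x) (x - y),
    real_inner_comm (gradient (laplacian u) x), inner_gradient_left, inner_gradient_left,
    inner_gradient_left]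
  · simp only [smul_apply, smul_eq_mul]
    ring
  all_goals fun_prop

lemma vdiv_pohozaevField_sub_rellichField {F : ℝ → ℝ} {u : E → ℝ} {x : E} (hu : ContDiff ℝ 4 u)
    (hF : HasDerivAt F (laplacian (laplacian u) x) (u x)) (y : E) :
    vdiv (pohozaevField y F u) x - vdiv (rellichField y u (laplacian u)) x = 4 * F (u x) := by
  rw [vdiv_pohozaevField hF (hu.of_le (by norm_num)),
    vdiv_rellichField (hu.of_le (by norm_num)) (hu.laplacian le_rfl)]
  ring

lemma hasDerivAt_abs_rpow_div {p : ℝ} (hp : 0 < p) (t : ℝ) :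
    HasDerivAt (fun s : ℝ => |s| ^ (p + 1) / (p + 1)) (|t| ^ (p - 1) * t) t := by
  refine ((hasDerivAt_abs_rpow t (by linarith : 1 < p + 1)).div_const (p + 1)).congr_deriv ?_
  rw [show p + 1 - 2 = p - 1 by ring]
  field_simp

lemma contDiff_abs_rpow_div {p : ℝ} (hp : 0 < p) :
    ContDiff ℝ 1 (fun s : ℝ => |s| ^ (p + 1) / (p + 1)) := by
  have h : ContDiff ℝ 1 fun s : ℝ => ‖s‖ ^ (p + 1) := contDiff_norm_rpow (by linarith)
  simpa using h.div_const (p + 1)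

lemma setIntegral_eq_sub_of_vdiv_sub {Ω : Set E} (hΩ : MeasurableSet Ω)
    (hΩb : Bornology.IsBounded Ω) {B : (E → E) → ℝ}
    (hdiv : ∀ G : E → E, ContDiff ℝ 1 G → ∫ x in Ω, vdiv G x = B G) {G₁ G₂ : E → E}
    (hG₁ : ContDiff ℝ 1 G₁) (hG₂ : ContDiff ℝ 1 G₂) {g : E → ℝ}
    (hg : ∀ x ∈ Ω, vdiv G₁ x - vdiv G₂ x = g x) :
    ∫ x in Ω, g x = B G₁ - B G₂ := by
  have hint : ∀ G : E → E, ContDiff ℝ 1 G → IntegrableOn (vdiv G) Ω := fun G hG =>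
    (hG.continuous_vdiv.continuousOn.integrableOn_compact hΩb.isCompact_closure).mono_set
      subset_closure
  rw [← hdiv G₁ hG₁, ← hdiv G₂ hG₂, ← integral_sub (hint G₁ hG₁) (hint G₂ hG₂)]
  exact (setIntegral_congr_fun hΩ hg).symm

/-- `ν` and `σ`, the outward unit normal and the surface measure of `∂Ω`, are characterised only
through the divergence theorem `hdiv`. -/
theorem pohozaev_identity (Ω : Set E) (hΩopen : IsOpen Ω)
    (hΩbdd : Bornology.IsBounded Ω)
    (ν : E → E) (σ : Measure E) (p : ℝ) (hp : 1 < p)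
    (u : E → ℝ) (hu : ContDiff ℝ 4 u)
    (hpde : ∀ x ∈ Ω, laplacian (laplacian u) x = |u x| ^ (p - 1) * u x)
    (hdiv : ∀ F : E → E, ContDiff ℝ 1 F →
      (∫ x in Ω, vdiv F x) = ∫ x in frontier Ω, ⟪F x, ν x⟫ ∂σ)
    (y : E) :
    (4 / (p + 1)) * ∫ x in Ω, |u x| ^ (p + 1) =
      (∫ x in frontier Ω,
        (⟪x - y, ν x⟫ * |u x| ^ (p + 1) / (p + 1)
          + 1 / 2 * ⟪x - y, ν x⟫ * (laplacian u x) ^ 2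
          - 2 * ⟪gradient u x, ν x⟫ * laplacian u x) ∂σ)
      - ∫ x in frontier Ω,
        (⟪gradient (laplacian u) x, ν x⟫ * ⟪x - y, gradient u x⟫
          + ⟪gradient u x, ν x⟫ * ⟪x - y, gradient (laplacian u) x⟫
          - ⟪gradient u x, gradient (laplacian u) x⟫ * ⟪x - y, ν x⟫) ∂σ := by
  have hp₀ : 0 < p := by linarith
  have key := setIntegral_eq_sub_of_vdiv_sub hΩopen.measurableSet hΩbdd hdiv
    (contDiff_pohozaevField (contDiff_abs_rpow_div hp₀) (hu.of_le (by norm_num)) y)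
    (contDiff_rellichField (hu.of_le (by norm_num)) (hu.laplacian (by norm_num)) y)
    fun x hx => vdiv_pohozaevField_sub_rellichField hu
      ((hpde x hx).symm ▸ hasDerivAt_abs_rpow_div hp₀ (u x)) y
  calc (4 / (p + 1)) * ∫ x in Ω, |u x| ^ (p + 1)
      = ∫ x in Ω, 4 * (|u x| ^ (p + 1) / (p + 1)) := by
        rw [← integral_const_mul]
        congr 1 with x
        ring
    _ = _ := key
    _ = _ := by
        congr 1 <;> refine integral_congr_ae (ae_of_all _ fun x => ?_) <;>
          simp only [pohozaevField, rellichField, inner_sub_left, inner_add_left,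
            real_inner_smul_left] <;> ring
end

section
/- Let W solve Δ²W = e^W on ℝ⁴ with ∫_{ℝ⁴} e^W < ∞, and suppose the representation ΔW(x) = -(1/(4π²))∫_{ℝ⁴} e^{W(y)}/|x-y|² dy - 2∑_{j=1}^4 a_j holds with a_j ≥ 0. If ∫_{B_R(0)} |ΔW| dx ≤ C R² for all R > 1, then a_j = 0 for all j. -/
open MeasureTheory Metric

local notation "E" => EuclideanSpace ℝ (Fin 4)

theorem laplacian_continuous {f : E → ℝ} (hf : ContDiff ℝ (⊤ : ℕ∞) f) :
    Continuous (laplacian f) := by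
  apply continuous_finset_sum
  intro i _
  have h1 : ContDiff ℝ (⊤ : ℕ∞) (fun y => fderiv ℝ f y (EuclideanSpace.single i 1)) := by
    have := (hf.fderiv_right (m := (⊤ : ℕ∞)) le_rfl)
    exact this.clm_apply contDiff_const
  have h2 : Continuous (fderiv ℝ (fun y => fderiv ℝ f y (EuclideanSpace.single i 1))) :=
    (h1.fderiv_right (m := 0) (by simp)).continuous
  exact (h2.clm_apply continuous_const)

/-- If `W` solves `Δ²W = e^W` on ℝ⁴ with `∫ e^W < ∞`, the representation
`ΔW(x) = -(1/4π²)∫ e^{W(y)}/|x-y|² dy - 2∑ aⱼ` holds with `aⱼ ≥ 0`, and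
`∫_{B_R}|ΔW| ≤ CR²` for all `R > 1`, then all `aⱼ = 0`. -/
theorem linear_part_vanishes (W : E → ℝ) (hW : ContDiff ℝ (⊤ : ℕ∞) W)
    (hpde : ∀ x, laplacian (laplacian W) x = Real.exp (W x))
    (hfin : Integrable (fun y => Real.exp (W y)))
    (a : Fin 4 → ℝ) (ha : ∀ j, 0 ≤ a j)
    (hrep : ∀ x, laplacian W x =
      -(1 / (4 * Real.pi ^ 2)) * (∫ y, Real.exp (W y) / ‖x - y‖ ^ 2) - 2 * ∑ j, a j)
    (C : ℝ)
    (hgrow : ∀ R : ℝ, 1 < R → (∫ x in ball (0 : E) R, |laplacian W x|) ≤ C * R ^ 2) :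
    ∀ j, a j = 0 := by
  set S := ∑ j, a j with hS
  have hSnn : 0 ≤ S := Finset.sum_nonneg fun j _ => ha j
  -- pointwise lower bound
  have hlow : ∀ x : E, 2 * S ≤ |laplacian W x| := by
    intro x
    have hJ : 0 ≤ ∫ y, Real.exp (W y) / ‖x - y‖ ^ 2 :=
      integral_nonneg fun y => div_nonneg (Real.exp_pos _).le (by positivity)
    have hc : 0 ≤ 1 / (4 * Real.pi ^ 2) := by positivity
    have : laplacian W x ≤ -(2 * S) := by
      rw [hrep x]
      nlinarith
    calc 2 * S ≤ -(laplacian W x) := by linarith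
      _ ≤ |laplacian W x| := neg_le_abs _
  have hcont : Continuous (laplacian W) := laplacian_continuous hW
  set v : ℝ := (volume (ball (0 : E) 1)).toReal with hv
  have hvpos : 0 < v := by
    rw [hv]
    exact ENNReal.toReal_pos (measure_ball_pos _ _ one_pos).ne' measure_ball_lt_top.ne
  -- key inequality
  have hkey : ∀ R : ℝ, 1 < R → 2 * S * (R ^ 4 * v) ≤ C * R ^ 2 := by
    intro R hR
    have hR0 : (0:ℝ) ≤ R := by linarith
    have hmeas : volume (ball (0 : E) R) = ENNReal.ofReal (R ^ 4) * volume (ball (0 : E) 1) := by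
      have := Measure.addHaar_ball (volume : Measure E) 0 hR0
      simpa [finrank_euclideanSpace] using this
    have hμtop : volume (ball (0 : E) R) ≠ ⊤ := measure_ball_lt_top.ne
    have hint : IntegrableOn (fun x => |laplacian W x|) (ball (0 : E) R) volume :=
      (hcont.abs.locallyIntegrable.integrableOn_isCompact (isCompact_closedBall _ _)).mono_set
        ball_subset_closedBall
    have h1 := setIntegral_ge_of_const_le_real (μ := volume) measurableSet_ball hμtop
      (fun x _ => hlow x) hint
    have h2 : (volume (ball (0 : E) R)).toReal = R ^ 4 * v := by
      rw [hmeas, ENNReal.toReal_mul, ENNReal.toReal_ofReal (by positivity)]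
    calc 2 * S * (R ^ 4 * v) = 2 * S * (volume (ball (0 : E) R)).toReal := by rw [h2]
      _ ≤ ∫ x in ball (0 : E) R, |laplacian W x| := h1
      _ ≤ C * R ^ 2 := hgrow R hR
  -- conclude S = 0
  have hS0 : S = 0 := by
    by_contra h
    have hSpos : 0 < S := lt_of_le_of_ne hSnn (Ne.symm h)
    have hs : 0 < 2 * S * v := by positivity
    set R : ℝ := max 2 (C / (2 * S * v)) with hRdef
    have hR2 : (2:ℝ) ≤ R := le_max_left _ _
    have hR1 : (1:ℝ) < R := by linarith
    have := hkey R hR1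
    have hRpos : (0:ℝ) < R := by linarith
    have hRsq : (0:ℝ) < R ^ 2 := by positivity
    have h3 : 2 * S * v * R ^ 2 ≤ C := by
      have : 2 * S * v * R ^ 2 * R ^ 2 ≤ C * R ^ 2 := by nlinarith
      exact le_of_mul_le_mul_right (by linarith [this]) hRsq
    have h4 : R ^ 2 ≤ C / (2 * S * v) := (le_div_iff₀' hs).mpr (by linarith [h3])
    have h5 : C / (2 * S * v) ≤ R := le_max_right _ _
    nlinarith
  intro j
  have := Finset.sum_eq_zero_iff_of_nonneg (fun j _ => ha j) |>.mp hS0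
  exact this j (Finset.mem_univ j)
end
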